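/- arXiv:2202.00132 — 7 statements merged into one kernel-verified Lean document; each statement's English description precedes it below -/
import Mathlib

section
/- Let V be a finite set and f : 2^V → ℝ a set function. Then f is submodular if and only if for all S, T ⊆ V, f(T) ≤ f(S) + Σ_{v ∈ T\S} f(v | S) − Σ_{v ∈ S\T} f(v | (S ∪ T) \ {v}). -/
section Aux

variable {V : Type*} [Fintype V] [DecidableEq V] (f : Finset V → ℝ)

private lemma sub_lem1 (hsub : ∀ A B : Finset V, f A + f B ≥ f (A ∪ B) + f (A ∩ B)) :
    ∀ (D S : Finset V), Disjoint D S →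
      f (S ∪ D) ≤ f S + ∑ v ∈ D, (f (S ∪ {v}) - f S) := by
  intro D
  induction D using Finset.induction_on with
  | empty => intro S _; simp
  | @insert a D ha ih =>
    intro S hdisj
    have haS : a ∉ S := by
      have := Finset.disjoint_left.mp hdisj (Finset.mem_insert_self a D)
      exact this
    have hDdisj : Disjoint D S :=
      (Finset.disjoint_insert_left.mp hdisj).2
    have haD : a ∉ D := ha
    have h1 : (S ∪ D) ∪ (S ∪ {a}) = S ∪ insert a D := by
      ext x; simp; tauto
    have h2 : (S ∪ D) ∩ (S ∪ {a}) = S := by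
      ext x; simp
      constructor
      · rintro ⟨h | h, h' | h'⟩ <;> try tauto
        exact absurd (h' ▸ h) haD
      · tauto
    have := hsub (S ∪ D) (S ∪ {a})
    rw [h1, h2] at this
    rw [Finset.sum_insert ha]
    have hih := ih S hDdisj
    linarith

private lemma sub_lem2 (hsub : ∀ A B : Finset V, f A + f B ≥ f (A ∪ B) + f (A ∩ B))
    (U : Finset V) :
    ∀ (D : Finset V), D ⊆ U →
      ∑ v ∈ D, (f U - f (U \ {v})) ≤ f U - f (U \ D) := by
  intro D
  induction D using Finset.induction_on with
  | empty => intro _; simp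
  | @insert a D ha ih =>
    intro hsubU
    have haU : a ∈ U := hsubU (Finset.mem_insert_self a D)
    have hDU : D ⊆ U := fun x hx => hsubU (Finset.mem_insert_of_mem hx)
    have h1 : (U \ D) ∪ (U \ {a}) = U := by
      ext x; simp
      constructor
      · tauto
      · intro hx; by_cases h : x = a
        · left; exact ⟨hx, h ▸ ha⟩
        · right; exact ⟨hx, h⟩
    have h2 : (U \ D) ∩ (U \ {a}) = U \ insert a D := by
      ext x; simp; tauto
    have := hsub (U \ D) (U \ {a})
    rw [h1, h2] at this
    rw [Finset.sum_insert ha]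
    have hih := ih hDU
    linarith

private lemma sub_lem3
    (hloc : ∀ (X : Finset V) (a b : V), a ∉ X → b ∉ X → a ≠ b →
      f (insert a X) + f (insert b X) ≥ f (insert a (insert b X)) + f X) :
    ∀ (n : ℕ) (X Y : Finset V) (a : V), X ⊆ Y → a ∉ Y → (Y \ X).card = n →
      f (insert a Y) - f Y ≤ f (insert a X) - f X := by
  intro n
  induction n with
  | zero =>
    intro X Y a hXY haY hc
    have he : Y \ X = ∅ := Finset.card_eq_zero.mp hc
    have hYX : Y ⊆ X := Finset.sdiff_eq_empty_iff_subset.mp he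
    have : X = Y := Finset.Subset.antisymm hXY hYX
    subst this; linarith
  | succ n ih =>
    intro X Y a hXY haY hc
    have hne : (Y \ X).Nonempty := by
      rw [← Finset.card_pos, hc]; omega
    obtain ⟨b, hb⟩ := hne
    have hbY : b ∈ Y := (Finset.mem_sdiff.mp hb).1
    have hbX : b ∉ X := (Finset.mem_sdiff.mp hb).2
    set Y' := Y.erase b with hY'
    have hXY' : X ⊆ Y' := fun x hx =>
      Finset.mem_erase.mpr ⟨fun h => hbX (h ▸ hx), hXY hx⟩
    have haY' : a ∉ Y' := fun h => haY (Finset.mem_of_mem_erase h)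
    have hbY' : b ∉ Y' := Finset.notMem_erase b Y
    have hab : a ≠ b := fun h => haY (h ▸ hbY)
    have hcard : (Y' \ X).card = n := by
      have : Y' \ X = (Y \ X).erase b := by
        ext x; simp [hY', Finset.mem_erase, Finset.mem_sdiff]; tauto
      rw [this, Finset.card_erase_of_mem hb, hc]
      omega
    have hih := ih X Y' a hXY' haY' hcard
    have hYeq : insert b Y' = Y := Finset.insert_erase hbY
    have hl := hloc Y' a b haY' hbY' hab
    rw [hYeq] at hl
    linarith

private lemma sub_lem4
    (hloc : ∀ (X : Finset V) (a b : V), a ∉ X → b ∉ X → a ≠ b →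
      f (insert a X) + f (insert b X) ≥ f (insert a (insert b X)) + f X) :
    ∀ A B : Finset V, f A + f B ≥ f (A ∪ B) + f (A ∩ B) := by
  suffices h : ∀ (n : ℕ) (A B : Finset V), (A \ B).card = n →
      f A + f B ≥ f (A ∪ B) + f (A ∩ B) by
    intro A B; exact h _ A B rfl
  intro n
  induction n with
  | zero =>
    intro A B hc
    have he : A \ B = ∅ := Finset.card_eq_zero.mp hc
    have hAB : A ⊆ B := Finset.sdiff_eq_empty_iff_subset.mp he
    rw [Finset.union_eq_right.mpr hAB, Finset.inter_eq_left.mpr hAB]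
    linarith
  | succ n ih =>
    intro A B hc
    have hne : (A \ B).Nonempty := by
      rw [← Finset.card_pos, hc]; omega
    obtain ⟨a, ha⟩ := hne
    have haA : a ∈ A := (Finset.mem_sdiff.mp ha).1
    have haB : a ∉ B := (Finset.mem_sdiff.mp ha).2
    set A' := A.erase a with hA'
    have hcard : (A' \ B).card = n := by
      have : A' \ B = (A \ B).erase a := by
        ext x; simp [hA', Finset.mem_erase, Finset.mem_sdiff]; tauto
      rw [this, Finset.card_erase_of_mem ha, hc]
      omega
    have hih := ih A' B hcard
    have h3 := sub_lem3 f hloc ((A' ∪ B) \ A').card A' (A' ∪ B) a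
      Finset.subset_union_left
      (by simp [hA', Finset.mem_union, haB]) rfl
    have e1 : insert a A' = A := Finset.insert_erase haA
    have e2 : insert a (A' ∪ B) = A ∪ B := by
      ext x; simp [hA']
      constructor
      · rintro (h | h | h)
        · left; exact h ▸ haA
        · left; exact h.2
        · right; exact h
      · rintro (h | h)
        · by_cases hx : x = a
          · left; exact hx
          · right; left; exact ⟨hx, h⟩
        · right; right; exact h
    have e3 : A' ∩ B = A ∩ B := by
      ext x
      simp only [hA', Finset.mem_inter, Finset.mem_erase]
      constructor
      · rintro ⟨⟨_, h⟩, h'⟩; exact ⟨h, h'⟩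
      · rintro ⟨h, h'⟩
        exact ⟨⟨fun hx => haB (hx ▸ h'), h⟩, h'⟩
    rw [e1, e2] at h3
    rw [e3] at hih
    linarith

end Aux

/-- Union ULB: `f` is submodular iff for all `S, T ⊆ V`,
`f(T) ≤ f(S) + Σ_{v ∈ T\S} f(v|S) − Σ_{v ∈ S\T} f(v | (S ∪ T) \ {v})`. -/
theorem submodular_iff_union_ulb
    {V : Type*} [Fintype V] [DecidableEq V] (f : Finset V → ℝ) :
    (∀ A B : Finset V, f A + f B ≥ f (A ∪ B) + f (A ∩ B)) ↔
    (∀ S T : Finset V,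
      f T ≤ f S + (∑ v ∈ T \ S, (f (S ∪ {v}) - f S))
        - (∑ v ∈ S \ T, (f (((S ∪ T) \ {v}) ∪ {v}) - f ((S ∪ T) \ {v})))) := by
  constructor
  · intro hsub S T
    set U := S ∪ T with hU
    have hrw : ∑ v ∈ S \ T, (f ((U \ {v}) ∪ {v}) - f (U \ {v}))
        = ∑ v ∈ S \ T, (f U - f (U \ {v})) := by
      apply Finset.sum_congr rfl
      intro v hv
      have hvU : {v} ⊆ U := by
        simp [hU, Finset.singleton_subset_iff, (Finset.mem_sdiff.mp hv).1]
      rw [Finset.sdiff_union_of_subset hvU]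
    have hDsub : S \ T ⊆ U := fun x hx =>
      Finset.mem_union_left _ (Finset.mem_sdiff.mp hx).1
    have hUD : U \ (S \ T) = T := by
      ext x; simp [hU]; tauto
    have h2 := sub_lem2 f hsub U (S \ T) hDsub
    rw [hUD] at h2
    have h1 := sub_lem1 f hsub (T \ S) S Finset.sdiff_disjoint
    rw [Finset.union_sdiff_self_eq_union, ← hU] at h1
    rw [hrw]
    linarith
  · intro h
    apply sub_lem4
    intro X a b haX hbX hab
    have hh := h (insert a (insert b X)) X
    set S := insert a (insert b X) with hS
    have hTS : X \ S = ∅ := by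
      rw [Finset.sdiff_eq_empty_iff_subset]
      intro x hx; simp [hS]; tauto
    have hST : S \ X = {a, b} := by
      ext x; simp [hS]
      constructor
      · rintro ⟨h1 | h1 | h1, h2⟩ <;> tauto
      · rintro (h1 | h1)
        · exact ⟨Or.inl h1, fun hx => haX (h1 ▸ hx)⟩
        · exact ⟨Or.inr (Or.inl h1), fun hx => hbX (h1 ▸ hx)⟩
    have hSU : S ∪ X = S := by
      apply Finset.union_eq_left.mpr
      intro x hx; simp [hS]; tauto
    rw [hTS, hST, hSU] at hh
    simp only [Finset.sum_empty] at hh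
    rw [Finset.sum_pair hab] at hh
    have hda : (S \ {a}) ∪ {a} = S := Finset.sdiff_union_of_subset
      (by simp [hS])
    have hdb : (S \ {b}) ∪ {b} = S := Finset.sdiff_union_of_subset
      (by simp [hS])
    have hea : S \ {a} = insert b X := by
      ext x; simp [hS]
      constructor
      · rintro ⟨h1 | h1 | h1, h2⟩ <;> tauto
      · rintro (h1 | h1)
        · exact ⟨Or.inr (Or.inl h1), fun hx => hab (hx.symm.trans h1)⟩
        · exact ⟨Or.inr (Or.inr h1), fun hx => haX (hx ▸ h1)⟩
    have heb : S \ {b} = insert a X := by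
      ext x; simp [hS]
      constructor
      · rintro ⟨h1 | h1 | h1, h2⟩ <;> tauto
      · rintro (h1 | h1)
        · exact ⟨Or.inl h1, fun hx => hab (h1.symm.trans hx)⟩
        · exact ⟨Or.inr (Or.inr h1), fun hx => hbX (hx ▸ h1)⟩
    rw [hda, hdb, hea, heb] at hh
    rw [hS] at hh
    linarith
end

section
/- Let V be a finite set and f : 2^V → ℝ a set function. Then f is submodular if and only if for all S, T ⊆ V, f(T) ≤ f(S) + Σ_{v ∈ T\S} f(v | S ∩ T) − Σ_{v ∈ S\T} f(v | S \ {v}). -/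
section Aux

variable {V : Type*} [Fintype V] [DecidableEq V] (f : Finset V → ℝ)

/-- Diminishing returns from submodularity. -/
lemma sub_gain (hf : ∀ A B : Finset V, f A + f B ≥ f (A ∪ B) + f (A ∩ B))
    (X Y : Finset V) (v : V) (hXY : X ⊆ Y) (hv : v ∉ Y) :
    f (Y ∪ {v}) - f Y ≤ f (X ∪ {v}) - f X := by
  have h := hf (X ∪ {v}) Y
  have h1 : (X ∪ {v}) ∪ Y = Y ∪ {v} := by
    ext x; simp only [Finset.mem_union, Finset.mem_singleton]
    constructor
    · rintro ((hx | hx) | hx) <;> [exact Or.inl (hXY hx); exact Or.inr hx; exact Or.inl hx]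
    · rintro (hx | hx) <;> [exact Or.inr hx; exact Or.inl (Or.inr hx)]
  have h2 : (X ∪ {v}) ∩ Y = X := by
    ext x; simp only [Finset.mem_inter, Finset.mem_union, Finset.mem_singleton]
    constructor
    · rintro ⟨hx | hx, hy⟩
      · exact hx
      · exact absurd (hx ▸ hy) hv
    · intro hx; exact ⟨Or.inl hx, hXY hx⟩
  rw [h1, h2] at h
  linarith

/-- Telescoping upper bound. -/
lemma upper_tel (hf : ∀ A B : Finset V, f A + f B ≥ f (A ∪ B) + f (A ∩ B))
    (D X : Finset V) :
    f (X ∪ D) ≤ f X + ∑ v ∈ D \ X, (f (X ∪ {v}) - f X) := by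
  induction D using Finset.induction_on with
  | empty => simp
  | @insert a D ha ih =>
    by_cases haX : a ∈ X
    · have h1 : X ∪ insert a D = X ∪ D := by
        ext x; simp only [Finset.mem_union, Finset.mem_insert]
        constructor
        · rintro (hx | hx | hx) <;> [exact Or.inl hx; exact Or.inl (hx ▸ haX); exact Or.inr hx]
        · rintro (hx | hx) <;> [exact Or.inl hx; exact Or.inr (Or.inr hx)]
      have h2 : insert a D \ X = D \ X := by
        ext x; simp only [Finset.mem_sdiff, Finset.mem_insert]
        constructor
        · rintro ⟨hx | hx, hnx⟩
          · exact absurd (hx ▸ haX) hnx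
          · exact ⟨hx, hnx⟩
        · rintro ⟨hx, hnx⟩; exact ⟨Or.inr hx, hnx⟩
      rw [h1, h2]; exact ih
    · have haD : a ∉ X ∪ D := by simp [haX, ha]
      have hstep : f ((X ∪ D) ∪ {a}) - f (X ∪ D) ≤ f (X ∪ {a}) - f X :=
        sub_gain f hf X (X ∪ D) a Finset.subset_union_left haD
      have h1 : X ∪ insert a D = (X ∪ D) ∪ {a} := by
        ext x; simp only [Finset.mem_union, Finset.mem_insert, Finset.mem_singleton]; tauto
      have h2 : insert a D \ X = insert a (D \ X) := by
        ext x; simp only [Finset.mem_sdiff, Finset.mem_insert]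
        constructor
        · rintro ⟨hx | hx, hnx⟩ <;> [exact Or.inl hx; exact Or.inr ⟨hx, hnx⟩]
        · rintro (hx | ⟨hx, hnx⟩)
          · exact ⟨Or.inl hx, hx ▸ haX⟩
          · exact ⟨Or.inr hx, hnx⟩
      have ha' : a ∉ D \ X := fun h => ha (Finset.mem_sdiff.mp h).1
      rw [h1, h2, Finset.sum_insert ha']
      linarith

/-- Telescoping lower bound. -/
lemma lower_tel (hf : ∀ A B : Finset V, f A + f B ≥ f (A ∪ B) + f (A ∩ B))
    (D S : Finset V) (hDS : D ⊆ S) :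
    f (S \ D) + ∑ v ∈ D, (f ((S \ {v}) ∪ {v}) - f (S \ {v})) ≤ f S := by
  induction D using Finset.induction_on with
  | empty => simp
  | @insert a D ha ih =>
    have haS : a ∈ S := hDS (Finset.mem_insert_self a D)
    have hDS' : D ⊆ S := fun x hx => hDS (Finset.mem_insert_of_mem hx)
    have ih' := ih hDS'
    have key : f (S \ insert a D) + (f ((S \ {a}) ∪ {a}) - f (S \ {a})) ≤ f (S \ D) := by
      have haSD : a ∈ S \ D := Finset.mem_sdiff.mpr ⟨haS, ha⟩
      have e1 : ((S \ D) \ {a}) ∪ {a} = S \ D := by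
        ext x
        simp only [Finset.mem_union, Finset.mem_sdiff, Finset.mem_singleton]
        constructor
        · rintro (⟨⟨h1, h2⟩, _⟩ | h) <;> [exact ⟨h1, h2⟩;
            exact h ▸ Finset.mem_sdiff.mp haSD]
        · rintro ⟨h1, h2⟩
          by_cases hxa : x = a
          · exact Or.inr hxa
          · exact Or.inl ⟨⟨h1, h2⟩, hxa⟩
      have e2 : S \ insert a D = (S \ D) \ {a} := by
        ext x
        simp only [Finset.mem_sdiff, Finset.mem_insert, Finset.mem_singleton]
        tauto
      have hsub : (S \ D) \ {a} ⊆ S \ {a} := by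
        intro x hx
        simp only [Finset.mem_sdiff, Finset.mem_singleton] at hx ⊢
        exact ⟨hx.1.1, hx.2⟩
      have hna : a ∉ S \ {a} := by simp
      have := sub_gain f hf ((S \ D) \ {a}) (S \ {a}) a hsub hna
      rw [e1] at this
      rw [e2]
      linarith
    rw [Finset.sum_insert ha]
    linarith [key, ih']

/-- Pairwise submodularity from the ULB. -/
lemma pairwise_of_ulb
    (hu : ∀ S T : Finset V,
      f T ≤ f S + (∑ v ∈ T \ S, (f ((S ∩ T) ∪ {v}) - f (S ∩ T)))
        - (∑ v ∈ S \ T, (f ((S \ {v}) ∪ {v}) - f (S \ {v}))))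
    (X : Finset V) (a b : V) (ha : a ∉ X) (hb : b ∉ X) (hab : a ≠ b) :
    f (X ∪ {a, b}) + f X ≤ f (X ∪ {a}) + f (X ∪ {b}) := by
  have h := hu X (X ∪ {a, b})
  have h1 : X ∩ (X ∪ {a, b}) = X := Finset.inter_eq_left.mpr Finset.subset_union_left
  have h2 : (X ∪ {a, b}) \ X = {a, b} := by
    ext x
    simp only [Finset.mem_sdiff, Finset.mem_union, Finset.mem_insert, Finset.mem_singleton]
    constructor
    · rintro ⟨hx | hx, hnx⟩ <;> [exact absurd hx hnx; exact hx]
    · rintro (hx | hx)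
      · exact ⟨Or.inr (Or.inl hx), hx ▸ ha⟩
      · exact ⟨Or.inr (Or.inr hx), hx ▸ hb⟩
  have h3 : X \ (X ∪ {a, b}) = ∅ := by
    apply Finset.sdiff_eq_empty_iff_subset.mpr Finset.subset_union_left
  rw [h1, h2, h3, Finset.sum_pair hab, Finset.sum_empty] at h
  linarith

/-- Diminishing returns from pairwise submodularity, by induction. -/
lemma gain_mono_of_ulb
    (hu : ∀ S T : Finset V,
      f T ≤ f S + (∑ v ∈ T \ S, (f ((S ∩ T) ∪ {v}) - f (S ∩ T)))
        - (∑ v ∈ S \ T, (f ((S \ {v}) ∪ {v}) - f (S \ {v}))))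
    (D X : Finset V) (v : V) (hvX : v ∉ X) (hvD : v ∉ D) :
    f ((X ∪ D) ∪ {v}) - f (X ∪ D) ≤ f (X ∪ {v}) - f X := by
  induction D using Finset.induction_on with
  | empty => simp
  | @insert a D ha ih =>
    have hvD' : v ∉ D := fun h => hvD (Finset.mem_insert_of_mem h)
    have hva : v ≠ a := fun h => hvD (h ▸ Finset.mem_insert_self a D)
    have ih' := ih hvD'
    by_cases haX : a ∈ X
    · have he : X ∪ insert a D = X ∪ D := by
        ext x; simp only [Finset.mem_union, Finset.mem_insert]
        constructor
        · rintro (hx | hx | hx) <;> [exact Or.inl hx; exact Or.inl (hx ▸ haX); exact Or.inr hx]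
        · rintro (hx | hx) <;> [exact Or.inl hx; exact Or.inr (Or.inr hx)]
      rw [he]
      exact ih'
    · by_cases haD : a ∈ D
      · have he : insert a D = D := Finset.insert_eq_self.mpr haD
        rw [he]; exact ih'
      · have hend : a ∉ X ∪ D := by simp [haX, haD]
        have hvnd : v ∉ X ∪ D := by simp [hvX, hvD']
        have hp := pairwise_of_ulb f hu (X ∪ D) a v hend hvnd (Ne.symm hva)
        have e1 : X ∪ insert a D = (X ∪ D) ∪ {a} := by
          ext x; simp only [Finset.mem_union, Finset.mem_insert, Finset.mem_singleton]; tauto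
        have e2 : (X ∪ insert a D) ∪ {v} = (X ∪ D) ∪ {a, v} := by
          ext x
          simp only [Finset.mem_union, Finset.mem_insert, Finset.mem_singleton]
          tauto
        rw [e2, e1]
        linarith

/-- Monotone differences over adding a disjoint set, from pairwise submodularity. -/
lemma diff_mono_of_ulb
    (hu : ∀ S T : Finset V,
      f T ≤ f S + (∑ v ∈ T \ S, (f ((S ∩ T) ∪ {v}) - f (S ∩ T)))
        - (∑ v ∈ S \ T, (f ((S \ {v}) ∪ {v}) - f (S \ {v}))))
    (D X Y : Finset V) (hXY : X ⊆ Y) (hD : ∀ a ∈ D, a ∉ Y) :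
    f (Y ∪ D) - f Y ≤ f (X ∪ D) - f X := by
  induction D using Finset.induction_on with
  | empty => simp
  | @insert a D ha ih =>
    have haY : a ∉ Y := hD a (Finset.mem_insert_self a D)
    have hD' : ∀ b ∈ D, b ∉ Y := fun b hb => hD b (Finset.mem_insert_of_mem hb)
    have ih' := ih hD'
    -- gain at Y ∪ D vs X ∪ D using gain_mono with base X ∪ D and extra (Y ∪ D) \ (X ∪ D)
    have haXD : a ∉ X ∪ D := by
      simp only [Finset.mem_union, not_or]
      exact ⟨fun h => haY (hXY h), ha⟩
    have hsub : X ∪ D ⊆ Y ∪ D := Finset.union_subset_union_left hXY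
    have hkey : f ((Y ∪ D) ∪ {a}) - f (Y ∪ D) ≤ f ((X ∪ D) ∪ {a}) - f (X ∪ D) := by
      have haYD : a ∉ Y ∪ D := by simp [haY, ha]
      have e : (X ∪ D) ∪ ((Y ∪ D) \ (X ∪ D)) = Y ∪ D := Finset.union_sdiff_of_subset hsub
      have hna : a ∉ (Y ∪ D) \ (X ∪ D) := fun h => haYD (Finset.mem_sdiff.mp h).1
      have := gain_mono_of_ulb f hu ((Y ∪ D) \ (X ∪ D)) (X ∪ D) a haXD hna
      rw [e] at this
      exact this
    have e1 : Y ∪ insert a D = (Y ∪ D) ∪ {a} := by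
      ext x; simp only [Finset.mem_union, Finset.mem_insert, Finset.mem_singleton]; tauto
    have e2 : X ∪ insert a D = (X ∪ D) ∪ {a} := by
      ext x; simp only [Finset.mem_union, Finset.mem_insert, Finset.mem_singleton]; tauto
    rw [e2, e1]
    linarith

end Aux

/-- Intersection ULB: `f` is submodular iff for all `S, T ⊆ V`,
`f(T) ≤ f(S) + Σ_{v ∈ T\S} f(v | S ∩ T) − Σ_{v ∈ S\T} f(v | S \ {v})`. -/
theorem submodular_iff_intersection_ulb
    {V : Type*} [Fintype V] [DecidableEq V] (f : Finset V → ℝ) :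
    (∀ A B : Finset V, f A + f B ≥ f (A ∪ B) + f (A ∩ B)) ↔
    (∀ S T : Finset V,
      f T ≤ f S + (∑ v ∈ T \ S, (f ((S ∩ T) ∪ {v}) - f (S ∩ T)))
        - (∑ v ∈ S \ T, (f ((S \ {v}) ∪ {v}) - f (S \ {v})))) := by
  constructor
  · intro hf S T
    have hU := upper_tel f hf T (S ∩ T)
    have e1 : (S ∩ T) ∪ T = T := Finset.union_eq_right.mpr Finset.inter_subset_right
    have e2 : T \ (S ∩ T) = T \ S := by
      ext x; simp only [Finset.mem_sdiff, Finset.mem_inter]; tauto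
    rw [e2, e1] at hU
    have hL := lower_tel f hf (S \ T) S Finset.sdiff_subset
    have e3 : S \ (S \ T) = S ∩ T := Finset.sdiff_sdiff_self_left S T
    rw [e3] at hL
    linarith
  · intro hu A B
    have h := diff_mono_of_ulb f hu (A \ B) (A ∩ B) B Finset.inter_subset_right
      (fun a haB => (Finset.mem_sdiff.mp haB).2)
    have e1 : B ∪ (A \ B) = A ∪ B := by
      ext x; simp only [Finset.mem_union, Finset.mem_sdiff]; tauto
    have e2 : (A ∩ B) ∪ (A \ B) = A := by
      ext x; simp only [Finset.mem_union, Finset.mem_inter, Finset.mem_sdiff]; tauto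
    rw [e2, e1] at h
    linarith
end

section
/- Let V be a finite set and f : 2^V → ℝ a set function. Then f is submodular if and only if for all T ⊆ S ⊆ V, f(T) ≤ f(S) − Σ_{v ∈ S\T} f(v | S \ {v}). -/
/-- Intersection UB: `f` is submodular iff for all `T ⊆ S ⊆ V`,
`f(T) ≤ f(S) − Σ_{v ∈ S\T} f(v | S \ {v})`. -/
theorem submodular_iff_intersection_ub
    {V : Type*} [Fintype V] [DecidableEq V] (f : Finset V → ℝ) :
    (∀ A B : Finset V, f A + f B ≥ f (A ∪ B) + f (A ∩ B)) ↔
    (∀ S T : Finset V, T ⊆ S →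
      f T ≤ f S - ∑ v ∈ S \ T, (f ((S \ {v}) ∪ {v}) - f (S \ {v}))) := by
  constructor
  · intro hsub
    have key : ∀ n (S T : Finset V), T ⊆ S → (S \ T).card = n →
        f T ≤ f S - ∑ v ∈ S \ T, (f ((S \ {v}) ∪ {v}) - f (S \ {v})) := by
      intro n
      induction n with
      | zero =>
        intro S T hTS hcard
        have hST : S = T := by
          have := Finset.sdiff_eq_empty_iff_subset.mp (Finset.card_eq_zero.mp hcard)
          exact Finset.Subset.antisymm this hTS
        subst hST
        simp
      | succ n ih =>
        intro S T hTS hcard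
        obtain ⟨v, hv⟩ : (S \ T).Nonempty := Finset.card_pos.mp (by omega)
        have hvS : v ∈ S := (Finset.mem_sdiff.mp hv).1
        have hvT : v ∉ T := (Finset.mem_sdiff.mp hv).2
        have hT'S : insert v T ⊆ S := Finset.insert_subset hvS hTS
        have hsd : S \ insert v T = (S \ T).erase v := by
          rw [Finset.sdiff_insert]
        have hcard' : (S \ insert v T).card = n := by
          rw [hsd, Finset.card_erase_of_mem hv]; omega
        have hih := ih S (insert v T) hT'S hcard'
        -- split the sum
        have hsum : ∑ u ∈ S \ T, (f ((S \ {u}) ∪ {u}) - f (S \ {u}))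
            = (f ((S \ {v}) ∪ {v}) - f (S \ {v}))
              + ∑ u ∈ S \ insert v T, (f ((S \ {u}) ∪ {u}) - f (S \ {u})) := by
          rw [hsd]
          exact (Finset.add_sum_erase _ _ hv).symm
        have hvunion : (S \ {v}) ∪ {v} = S := by
          rw [Finset.sdiff_union_self_eq_union, Finset.union_eq_left]
          simpa using hvS
        -- submodularity step
        have hstep := hsub (insert v T) (S \ {v})
        have hU : insert v T ∪ (S \ {v}) = S := by
          ext x
          simp only [Finset.mem_union, Finset.mem_insert, Finset.mem_sdiff,
            Finset.mem_singleton]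
          constructor
          · rintro ((rfl | hx) | ⟨hx, _⟩)
            · exact hvS
            · exact hTS hx
            · exact hx
          · intro hx
            by_cases hxe : x = v
            · exact Or.inl (Or.inl hxe)
            · exact Or.inr ⟨hx, hxe⟩
        have hI : insert v T ∩ (S \ {v}) = T := by
          ext x
          simp only [Finset.mem_inter, Finset.mem_insert, Finset.mem_sdiff,
            Finset.mem_singleton]
          constructor
          · rintro ⟨rfl | hx, _, hne⟩
            · exact absurd rfl hne
            · exact hx
          · intro hx
            have hne : x ≠ v := fun h => hvT (h ▸ hx)
            exact ⟨Or.inr hx, hTS hx, hne⟩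
        rw [hU, hI] at hstep
        rw [hsum, hvunion]
        linarith
    intro S T hTS
    exact key _ S T hTS rfl
  · intro h
    -- local submodularity
    have hloc : ∀ (X : Finset V) (u v : V), u ∉ X → v ∉ X → u ≠ v →
        f (insert u (insert v X)) + f X ≤ f (insert u X) + f (insert v X) := by
      intro X u v huX hvX huv
      set S := insert u (insert v X) with hS
      have hXS : X ⊆ S := by
        intro x hx; exact Finset.mem_insert_of_mem (Finset.mem_insert_of_mem hx)
      have h1 := h S X hXS
      have hsd : S \ X = {u, v} := by
        ext x
        simp only [hS, Finset.mem_sdiff, Finset.mem_insert, Finset.mem_singleton]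
        constructor
        · rintro ⟨rfl | rfl | hx, hxX⟩
          · exact Or.inl rfl
          · exact Or.inr rfl
          · exact absurd hx hxX
        · rintro (rfl | rfl)
          · exact ⟨Or.inl rfl, huX⟩
          · exact ⟨Or.inr (Or.inl rfl), hvX⟩
      have hSu : S \ {u} = insert v X := by
        ext x
        simp only [hS, Finset.mem_sdiff, Finset.mem_insert, Finset.mem_singleton]
        constructor
        · rintro ⟨rfl | hx, hne⟩
          · exact absurd rfl hne
          · exact hx
        · rintro (rfl | hx)
          · exact ⟨Or.inr (Or.inl rfl), Ne.symm huv⟩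
          · exact ⟨Or.inr (Or.inr hx), fun hh => huX (hh ▸ hx)⟩
      have hSv : S \ {v} = insert u X := by
        ext x
        simp only [hS, Finset.mem_sdiff, Finset.mem_insert, Finset.mem_singleton]
        constructor
        · rintro ⟨rfl | rfl | hx, hne⟩
          · exact Or.inl rfl
          · exact absurd rfl hne
          · exact Or.inr hx
        · rintro (rfl | hx)
          · exact ⟨Or.inl rfl, huv⟩
          · exact ⟨Or.inr (Or.inr hx), fun hh => hvX (hh ▸ hx)⟩
      have hUu : (S \ {u}) ∪ {u} = S := by
        rw [Finset.sdiff_union_self_eq_union, Finset.union_eq_left]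
        simp [hS]
      have hUv : (S \ {v}) ∪ {v} = S := by
        rw [Finset.sdiff_union_self_eq_union, Finset.union_eq_left]
        simp [hS]
      rw [hsd, Finset.sum_pair huv, hUu, hUv, hSu, hSv] at h1
      linarith
    -- monotone marginals
    have hmarg : ∀ n (A B : Finset V) (v : V), A ⊆ B → v ∉ B → (B \ A).card = n →
        f (insert v B) - f B ≤ f (insert v A) - f A := by
      intro n
      induction n with
      | zero =>
        intro A B v hAB hvB hcard
        have : B = A := Finset.Subset.antisymm
          (Finset.sdiff_eq_empty_iff_subset.mp (Finset.card_eq_zero.mp hcard)) hAB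
        subst this; simp
      | succ n ih =>
        intro A B v hAB hvB hcard
        obtain ⟨u, hu⟩ : (B \ A).Nonempty := Finset.card_pos.mp (by omega)
        have huB : u ∈ B := (Finset.mem_sdiff.mp hu).1
        have huA : u ∉ A := (Finset.mem_sdiff.mp hu).2
        set B' := B.erase u with hB'
        have hAB' : A ⊆ B' := fun x hx =>
          Finset.mem_erase.mpr ⟨fun hh => huA (hh ▸ hx), hAB hx⟩
        have hvB' : v ∉ B' := fun hh => hvB (Finset.mem_of_mem_erase hh)
        have hcard' : (B' \ A).card = n := by
          rw [hB', Finset.erase_sdiff_comm, Finset.card_erase_of_mem hu]; omega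
        have hih := ih A B' v hAB' hvB' hcard'
        have huB' : u ∉ B' := Finset.notMem_erase u B
        have huv : v ≠ u := fun hh => hvB (hh ▸ huB)
        have hBins : insert u B' = B := Finset.insert_erase huB
        have hl := hloc B' v u hvB' huB' huv
        rw [hBins] at hl
        linarith
    -- main induction
    have main : ∀ n (A B : Finset V), (B \ A).card = n →
        f (A ∪ B) + f (A ∩ B) ≤ f A + f B := by
      intro n
      induction n with
      | zero =>
        intro A B hcard
        have hBA : B ⊆ A := Finset.sdiff_eq_empty_iff_subset.mp (Finset.card_eq_zero.mp hcard)
        rw [Finset.union_eq_left.mpr hBA, Finset.inter_eq_right.mpr hBA]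
      | succ n ih =>
        intro A B hcard
        obtain ⟨v, hv⟩ : (B \ A).Nonempty := Finset.card_pos.mp (by omega)
        have hvB : v ∈ B := (Finset.mem_sdiff.mp hv).1
        have hvA : v ∉ A := (Finset.mem_sdiff.mp hv).2
        set B' := B.erase v with hB'
        have hcard' : (B' \ A).card = n := by
          rw [hB', Finset.erase_sdiff_comm, Finset.card_erase_of_mem hv]; omega
        have hih := ih A B' hcard'
        have hvB' : v ∉ B' := Finset.notMem_erase v B
        have hvAB' : v ∉ A ∪ B' := by simp [hvA, hvB']
        have hsubset : B' ⊆ A ∪ B' := Finset.subset_union_right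
        have hm := hmarg _ B' (A ∪ B') v hsubset hvAB' rfl
        have hBins : insert v B' = B := Finset.insert_erase hvB
        have hUins : insert v (A ∪ B') = A ∪ B := by
          rw [← Finset.union_insert, hBins]
        have hIeq : A ∩ B' = A ∩ B := by
          ext x
          simp only [hB', Finset.mem_inter, Finset.mem_erase]
          constructor
          · rintro ⟨hxA, _, hxB⟩; exact ⟨hxA, hxB⟩
          · rintro ⟨hxA, hxB⟩
            exact ⟨hxA, fun hh => hvA (hh ▸ hxA), hxB⟩
        rw [hBins, hUins] at hm
        rw [← hIeq]
        linarith
    intro A B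
    exact main _ A B rfl
end

section
/- Let V be a finite set and f : 2^V → ℝ a set function. Then f is submodular if and only if for all S, T ⊆ V, f(T) ≤ f(S) + Σ_{v ∈ T\S} f(v | S ∩ T) − Σ_{v ∈ S\T} f(v | (S ∪ T) \ {v}). -/
section Aux

variable {V : Type*} [DecidableEq V] (f : Finset V → ℝ)

/-- diminishing returns from submodularity -/
lemma subm_dr (hf : ∀ A B : Finset V, f A + f B ≥ f (A ∪ B) + f (A ∩ B))
    {A B : Finset V} {v : V} (hAB : A ⊆ B) (hv : v ∉ B) :
    f (B ∪ {v}) - f B ≤ f (A ∪ {v}) - f A := by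
  have h := hf (A ∪ {v}) B
  have h1 : (A ∪ {v}) ∪ B = B ∪ {v} := by
    ext x; simp only [Finset.mem_union, Finset.mem_singleton]
    constructor <;> intro hx <;> [skip; skip] <;> tauto
  have h2 : (A ∪ {v}) ∩ B = A := by
    ext x; simp only [Finset.mem_inter, Finset.mem_union, Finset.mem_singleton]
    constructor
    · rintro ⟨hx | rfl, hxB⟩
      · exact hx
      · exact absurd hxB hv
    · intro hx; exact ⟨Or.inl hx, hAB hx⟩
  rw [h1, h2] at h
  linarith

lemma subm_claim1 (hf : ∀ A B : Finset V, f A + f B ≥ f (A ∪ B) + f (A ∩ B))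
    (D : Finset V) : ∀ X C : Finset V, C ⊆ X → Disjoint D X →
    f (X ∪ D) ≤ f X + ∑ v ∈ D, (f (C ∪ {v}) - f C) := by
  induction D using Finset.induction with
  | empty => intro X C _ _; simp
  | @insert v D' hv ih =>
    intro X C hCX hdisj
    have hdisj' : Disjoint D' X := by
      exact Finset.disjoint_of_subset_left (Finset.subset_insert _ _) hdisj
    have hvX : v ∉ X := by
      have := Finset.disjoint_left.mp hdisj (Finset.mem_insert_self v D')
      exact this
    have hvXD : v ∉ X ∪ D' := by
      simp only [Finset.mem_union]; tauto
    have hU : X ∪ insert v D' = (X ∪ D') ∪ {v} := by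
      ext x; simp only [Finset.mem_union, Finset.mem_insert, Finset.mem_singleton]; tauto
    have hdr := subm_dr f hf (A := C) (B := X ∪ D')
      (hCX.trans (Finset.subset_union_left)) hvXD
    have hih := ih X C hCX hdisj'
    rw [hU, Finset.sum_insert hv]
    linarith

lemma subm_claim2 (hf : ∀ A B : Finset V, f A + f B ≥ f (A ∪ B) + f (A ∩ B))
    (D : Finset V) : ∀ X : Finset V, D ⊆ X →
    f (X \ D) + ∑ v ∈ D, (f ((X \ {v}) ∪ {v}) - f (X \ {v})) ≤ f X := by
  induction D using Finset.induction with
  | empty => intro X _; simp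
  | @insert v D' hv ih =>
    intro X hDX
    have hvX : v ∈ X := hDX (Finset.mem_insert_self v D')
    set X' := X \ {v} with hX'
    have hD'X' : D' ⊆ X' := by
      intro w hw
      simp only [hX', Finset.mem_sdiff, Finset.mem_singleton]
      exact ⟨hDX (Finset.mem_insert_of_mem hw), fun h => hv (h ▸ hw)⟩
    have hXX' : X' ∪ {v} = X := by
      ext x; simp only [hX', Finset.mem_union, Finset.mem_sdiff, Finset.mem_singleton]
      constructor
      · rintro (⟨h, _⟩ | rfl); exact h; exact hvX
      · intro hx; by_cases hxv : x = v; · right; exact hxv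
        · left; exact ⟨hx, hxv⟩
    have hXD : X' \ D' = X \ insert v D' := by
      ext x; simp only [hX', Finset.mem_sdiff, Finset.mem_singleton, Finset.mem_insert]; tauto
    have hih := ih X' hD'X'
    rw [hXD] at hih
    -- bound each term of the sum over D'
    have hterm : ∀ w ∈ D', f ((X \ {w}) ∪ {w}) - f (X \ {w})
        ≤ f ((X' \ {w}) ∪ {w}) - f (X' \ {w}) := by
      intro w hw
      have hwv : w ≠ v := fun h => hv (h ▸ hw)
      have hsub : X' \ {w} ⊆ X \ {w} := by
        intro x hx
        simp only [hX', Finset.mem_sdiff, Finset.mem_singleton] at hx ⊢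
        tauto
      have hwX : w ∉ X \ {w} := by simp
      exact subm_dr f hf hsub hwX
    have hsum : ∑ w ∈ D', (f ((X \ {w}) ∪ {w}) - f (X \ {w}))
        ≤ ∑ w ∈ D', (f ((X' \ {w}) ∪ {w}) - f (X' \ {w})) :=
      Finset.sum_le_sum hterm
    have hstep : f X = f X' + (f ((X \ {v}) ∪ {v}) - f (X \ {v})) := by
      rw [← hX', hXX']; ring
    rw [Finset.sum_insert hv]
    linarith

/-- local exchange from the union/intersection condition -/
lemma lex_of_ui (H : ∀ S T : Finset V,
      f T ≤ f S + (∑ v ∈ T \ S, (f ((S ∩ T) ∪ {v}) - f (S ∩ T)))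
        - (∑ v ∈ S \ T, (f (((S ∪ T) \ {v}) ∪ {v}) - f ((S ∪ T) \ {v}))))
    {X : Finset V} {u w : V} (hu : u ∉ X) (hw : w ∉ X) (huw : u ≠ w) :
    f X + f ((X ∪ {u}) ∪ {w}) ≤ f (X ∪ {u}) + f (X ∪ {w}) := by
  have h := H (X ∪ {w}) (X ∪ {u})
  have hTS : (X ∪ {u}) \ (X ∪ {w}) = {u} := by
    ext x; simp only [Finset.mem_sdiff, Finset.mem_union, Finset.mem_singleton]
    constructor
    · rintro ⟨hx | rfl, hx2⟩
      · exact absurd (Or.inl hx) hx2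
      · rfl
    · rintro rfl; exact ⟨Or.inr rfl, by tauto⟩
  have hST : (X ∪ {w}) \ (X ∪ {u}) = {w} := by
    ext x; simp only [Finset.mem_sdiff, Finset.mem_union, Finset.mem_singleton]
    constructor
    · rintro ⟨hx | rfl, hx2⟩
      · exact absurd (Or.inl hx) hx2
      · rfl
    · rintro rfl; exact ⟨Or.inr rfl, by tauto⟩
  have hI : (X ∪ {w}) ∩ (X ∪ {u}) = X := by
    ext x; simp only [Finset.mem_inter, Finset.mem_union, Finset.mem_singleton]
    constructor
    · rintro ⟨hx | rfl, hx2 | h3⟩ <;> first | assumption | (exact absurd h3 huw.symm) | tauto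
    · tauto
  have hU : (X ∪ {w}) ∪ (X ∪ {u}) = (X ∪ {u}) ∪ {w} := by
    ext x; simp only [Finset.mem_union, Finset.mem_singleton]; tauto
  have hUw : ((X ∪ {u}) ∪ {w}) \ {w} = X ∪ {u} := by
    ext x; simp only [Finset.mem_sdiff, Finset.mem_union, Finset.mem_singleton]
    constructor
    · rintro ⟨hx | rfl, hx2⟩
      · exact hx
      · exact absurd rfl hx2
    · rintro (hx | rfl)
      · exact ⟨Or.inl (Or.inl hx), fun h => hw (h ▸ hx)⟩
      · exact ⟨Or.inl (Or.inr rfl), fun h => huw h⟩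
  rw [hTS, hST, hI, hU, Finset.sum_singleton, Finset.sum_singleton, hUw] at h
  have hIu : X ∪ {u} = X ∪ {u} := rfl
  have hXu : (X ∪ {u}) ∪ {w} = (X ∪ {u}) ∪ {w} := rfl
  linarith

/-- diminishing returns from local exchange -/
lemma dr_of_lex (lex : ∀ (X : Finset V) (u w : V), u ∉ X → w ∉ X → u ≠ w →
      f X + f ((X ∪ {u}) ∪ {w}) ≤ f (X ∪ {u}) + f (X ∪ {w}))
    (D : Finset V) : ∀ (A : Finset V) (v : V), v ∉ A ∪ D →
    f ((A ∪ D) ∪ {v}) - f (A ∪ D) ≤ f (A ∪ {v}) - f A := by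
  induction D using Finset.induction with
  | empty => intro A v _; simp
  | @insert w D' hw ih =>
    intro A v hv
    have hvA : v ∉ A ∪ D' := by
      simp only [Finset.mem_union, Finset.mem_insert] at hv ⊢; tauto
    have hvw : v ≠ w := by
      simp only [Finset.mem_union, Finset.mem_insert] at hv; tauto
    by_cases hwAD : w ∈ A ∪ D'
    · have : A ∪ insert w D' = A ∪ D' := by
        rw [Finset.union_insert, Finset.insert_eq_self.mpr hwAD]
      rw [this]; exact ih A v hvA
    · have hU : A ∪ insert w D' = (A ∪ D') ∪ {w} := by
        ext x; simp only [Finset.mem_union, Finset.mem_insert, Finset.mem_singleton]; tauto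
      have hlex := lex (A ∪ D') v w (by exact hvA) hwAD hvw
      have hcomm : ((A ∪ D') ∪ {v}) ∪ {w} = ((A ∪ D') ∪ {w}) ∪ {v} := by
        ext x; simp only [Finset.mem_union, Finset.mem_singleton]; tauto
      rw [hcomm] at hlex
      have hih := ih A v hvA
      rw [hU]
      linarith

end Aux

/-- Union/Intersection: `f` is submodular iff for all `S, T ⊆ V`,
`f(T) ≤ f(S) + Σ_{v ∈ T\S} f(v | S ∩ T) − Σ_{v ∈ S\T} f(v | (S ∪ T) \ {v})`. -/
theorem submodular_iff_union_intersection
    {V : Type*} [Fintype V] [DecidableEq V] (f : Finset V → ℝ) :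
    (∀ A B : Finset V, f A + f B ≥ f (A ∪ B) + f (A ∩ B)) ↔
    (∀ S T : Finset V,
      f T ≤ f S + (∑ v ∈ T \ S, (f ((S ∩ T) ∪ {v}) - f (S ∩ T)))
        - (∑ v ∈ S \ T, (f (((S ∪ T) \ {v}) ∪ {v}) - f ((S ∪ T) \ {v})))) := by
  constructor
  · intro hf S T
    have h1 := subm_claim1 f hf (T \ S) S (S ∩ T) Finset.inter_subset_left
      (Finset.sdiff_disjoint)
    have hU : S ∪ (T \ S) = S ∪ T := by
      ext x; simp only [Finset.mem_union, Finset.mem_sdiff]; tauto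
    rw [hU] at h1
    have h2 := subm_claim2 f hf (S \ T) (S ∪ T)
      (by intro x hx; simp only [Finset.mem_sdiff] at hx; exact Finset.mem_union_left _ hx.1)
    have hD : (S ∪ T) \ (S \ T) = T := by
      ext x; simp only [Finset.mem_sdiff, Finset.mem_union]; tauto
    rw [hD] at h2
    linarith
  · intro H A B
    have lex := fun (X : Finset V) (u w : V) (hu : u ∉ X) (hw : w ∉ X) (huw : u ≠ w) =>
      lex_of_ui f H hu hw huw
    have dr := dr_of_lex f lex
    -- submodularity by induction on A \ B
    have key : ∀ (D C B : Finset V), Disjoint D B → C ⊆ B →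
        f (C ∪ D) + f B ≥ f (B ∪ D) + f C := by
      intro D
      induction D using Finset.induction with
      | empty => intro C B _ _; simp; linarith []
      | @insert v D' hv ih =>
        intro C B hdisj hCB
        have hdisj' : Disjoint D' B :=
          Finset.disjoint_of_subset_left (Finset.subset_insert _ _) hdisj
        have hvB : v ∉ B := Finset.disjoint_left.mp hdisj (Finset.mem_insert_self v D')
        have hih := ih C B hdisj' hCB
        by_cases hvD' : v ∈ C ∪ D'
        · have hvC : v ∈ C := by
            rcases Finset.mem_union.mp hvD' with h | h
            · exact h
            · exact absurd h hv
          exact absurd (hCB hvC) hvB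
        · have hU1 : C ∪ insert v D' = (C ∪ D') ∪ {v} := by
            ext x; simp only [Finset.mem_union, Finset.mem_insert, Finset.mem_singleton]; tauto
          have hU2 : B ∪ insert v D' = (B ∪ D') ∪ {v} := by
            ext x; simp only [Finset.mem_union, Finset.mem_insert, Finset.mem_singleton]; tauto
          have hvBD : v ∉ (C ∪ D') ∪ B := by
            simp only [Finset.mem_union] at hvD' ⊢; tauto
          have hdr := dr B (C ∪ D') v hvBD
          have hUB : (C ∪ D') ∪ B = B ∪ D' := by
            ext x; simp only [Finset.mem_union]
            constructor
            · rintro ((h | h) | h) <;> [exact Or.inl (hCB h); exact Or.inr h; exact Or.inl h]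
            · tauto
          rw [hUB] at hdr
          rw [hU1, hU2]
          linarith
    have h := key (A \ B) (A ∩ B) B Finset.sdiff_disjoint Finset.inter_subset_right
    have h1 : (A ∩ B) ∪ (A \ B) = A := by
      ext x; simp only [Finset.mem_union, Finset.mem_inter, Finset.mem_sdiff]; tauto
    have h2 : B ∪ (A \ B) = A ∪ B := by
      ext x; simp only [Finset.mem_union, Finset.mem_sdiff]; tauto
    rw [h1, h2] at h
    linarith
end

section
/- Let V be a finite set, f : 2^V → ℝ a monotone non-decreasing submodular set function, k a positive integer, and X* ⊆ V an optimal set with |X*| = k maximizing f among sets of size at most k. Let X_0 = ∅ and X_{i+1} = X_i ∪ {v_{i+1}} where v_{i+1} maximizes f(v | X_i) over v ∈ V \ X_i (the greedy chain). Then for every i, f(X*) ≤ k · f(v_{i+1} | X_i) + f(X_i). -/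
lemma union_gain_bound {V : Type*} [DecidableEq V] (f : Finset V → ℝ)
    (hsub : ∀ A B : Finset V, f A + f B ≥ f (A ∪ B) + f (A ∩ B))
    (hmono : ∀ X Y : Finset V, X ⊆ Y → f X ≤ f Y)
    (S : Finset V) :
    ∀ T : Finset V, f (S ∪ T) ≤ f S + ∑ u ∈ T \ S, (f (insert u S) - f S) := by
  intro T
  induction T using Finset.induction_on with
  | empty => simp
  | @insert a T' ha ih =>
    by_cases haS : a ∈ S
    · have h1 : S ∪ insert a T' = S ∪ T' := by
        ext x; simp only [Finset.mem_union, Finset.mem_insert]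
        constructor
        · rintro (h | rfl | h) <;> tauto
        · tauto
      have h2 : insert a T' \ S = T' \ S := by
        ext x; simp only [Finset.mem_sdiff, Finset.mem_insert]
        constructor
        · rintro ⟨(rfl | h), hx⟩ <;> tauto
        · tauto
      rw [h1, h2]; exact ih
    · have h1 : S ∪ insert a T' = insert a (S ∪ T') := by
        ext x; simp only [Finset.mem_union, Finset.mem_insert]; tauto
      have h2 : insert a T' \ S = insert a (T' \ S) := by
        ext x; simp only [Finset.mem_sdiff, Finset.mem_insert]
        constructor
        · rintro ⟨(rfl | h), hx⟩ <;> tauto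
        · rintro (rfl | ⟨h, hx⟩) <;> tauto
      have haT'S : a ∉ T' \ S := by simp [ha]
      rw [h1, h2, Finset.sum_insert haT'S]
      have hsub' := hsub (S ∪ T') (insert a S)
      have hcap : S ⊆ (S ∪ T') ∩ insert a S := by
        intro x hx; simp [Finset.mem_inter, Finset.mem_union, Finset.mem_insert, hx]
      have hcup : insert a (S ∪ T') = (S ∪ T') ∪ insert a S := by
        ext x; simp only [Finset.mem_insert, Finset.mem_union]; tauto
      have hS : f S ≤ f ((S ∪ T') ∩ insert a S) := hmono _ _ hcap
      have : f (insert a (S ∪ T')) ≤ f (S ∪ T') + f (insert a S) - f S := by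
        rw [hcup]; linarith
      linarith

/-- For a monotone non-decreasing submodular `f`, an optimal set
`X*` of size `k` (maximizing `f` among sets of size at most `k`) and the greedy
chain `X_0 = ∅`, `X_{j+1} = X_j ∪ {v_{j+1}}` with `v_{j+1}` maximizing the gain,
we have `f(X*) ≤ k · f(v_{i+1} | X_i) + f(X_i)` for every `i`. -/
theorem greedy_gain_bound
    {V : Type*} [Fintype V] [DecidableEq V] (f : Finset V → ℝ)
    (hsub : ∀ A B : Finset V, f A + f B ≥ f (A ∪ B) + f (A ∩ B))
    (hmono : ∀ X Y : Finset V, X ⊆ Y → f X ≤ f Y)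
    (k : ℕ) (hk : 0 < k)
    (Xstar : Finset V) (hcard : Xstar.card = k)
    (hopt : ∀ Y : Finset V, Y.card ≤ k → f Y ≤ f Xstar)
    (X : ℕ → Finset V) (v : ℕ → V)
    (hX0 : X 0 = ∅) (i : ℕ)
    (hstep : ∀ j ≤ i, v (j + 1) ∉ X j ∧ X (j + 1) = insert (v (j + 1)) (X j) ∧
      ∀ u : V, u ∉ X j →
        f (insert u (X j)) - f (X j) ≤ f (insert (v (j + 1)) (X j)) - f (X j)) :
    f Xstar ≤ (k : ℝ) * (f (X (i + 1)) - f (X i)) + f (X i) := by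
  obtain ⟨hv, hXi1, hmax⟩ := hstep i le_rfl
  set G : ℝ := f (X (i + 1)) - f (X i) with hG
  have hGnn : 0 ≤ G := by
    rw [hG, hXi1]
    have := hmono (X i) (insert (v (i+1)) (X i)) (Finset.subset_insert _ _)
    linarith
  have hkey : f Xstar ≤ f (X i) + ∑ u ∈ Xstar \ X i, (f (insert u (X i)) - f (X i)) := by
    have h1 : f Xstar ≤ f (X i ∪ Xstar) := hmono _ _ Finset.subset_union_right
    have h2 := union_gain_bound f hsub hmono (X i) Xstar
    linarith
  have hsum : ∑ u ∈ Xstar \ X i, (f (insert u (X i)) - f (X i))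
      ≤ (Xstar \ X i).card * G := by
    rw [hG, hXi1]
    calc ∑ u ∈ Xstar \ X i, (f (insert u (X i)) - f (X i))
        ≤ ∑ _u ∈ Xstar \ X i, (f (insert (v (i+1)) (X i)) - f (X i)) := by
          apply Finset.sum_le_sum
          intro u hu
          exact hmax u (Finset.mem_sdiff.mp hu).2
      _ = (Xstar \ X i).card * (f (insert (v (i+1)) (X i)) - f (X i)) := by
          rw [Finset.sum_const, nsmul_eq_mul]
  have hcardle : ((Xstar \ X i).card : ℝ) ≤ (k : ℝ) := by
    have : (Xstar \ X i).card ≤ Xstar.card := Finset.card_le_card (Finset.sdiff_subset)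
    exact_mod_cast hcard ▸ this
  have : ((Xstar \ X i).card : ℝ) * G ≤ (k : ℝ) * G :=
    mul_le_mul_of_nonneg_right hcardle hGnn
  linarith
end

section
/- Let V be a finite set, f : 2^V → ℝ a monotone non-decreasing submodular set function, k a positive integer, and X* an optimal set of size k maximizing f among sets of size at most k. Let (X_i) be the greedy chain with X_0 = ∅. Then for every i, f(X*) − f(X_{i+1}) ≤ (1 − 1/k) · (f(X*) − f(X_i)). -/
lemma marginal_sum_bound {V : Type*} [DecidableEq V] (f : Finset V → ℝ)
    (hsub : ∀ A B : Finset V, f A + f B ≥ f (A ∪ B) + f (A ∩ B))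
    (hmono : ∀ X Y : Finset V, X ⊆ Y → f X ≤ f Y)
    (A B : Finset V) :
    f (A ∪ B) ≤ f A + ∑ e ∈ B \ A, (f (insert e A) - f A) := by
  induction B using Finset.induction_on with
  | empty => simp
  | @insert b B hb ih =>
    have h1 : f (insert b A) + f (A ∪ B) ≥ f (A ∪ insert b B) + f (insert b A ∩ (A ∪ B)) := by
      have := hsub (insert b A) (A ∪ B)
      have hu : insert b A ∪ (A ∪ B) = A ∪ insert b B := by
        ext x; simp only [Finset.mem_union, Finset.mem_insert]; tauto
      rwa [hu] at this
    have h2 : f A ≤ f (insert b A ∩ (A ∪ B)) := by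
      apply hmono
      intro x hx
      simp only [Finset.mem_inter, Finset.mem_insert, Finset.mem_union]
      exact ⟨Or.inr hx, Or.inl hx⟩
    by_cases hbA : b ∈ A
    · rw [Finset.insert_sdiff_of_mem B hbA]
      have hins : insert b A = A := Finset.insert_eq_self.mpr hbA
      rw [hins] at h1 h2
      linarith
    · have hsp : insert b B \ A = insert b (B \ A) := by         exact Finset.insert_sdiff_of_notMem B hbA
      rw [hsp, Finset.sum_insert (by simp [hb])]
      linarith

/-- For a monotone non-decreasing submodular `f`, an optimal set
`X*` of size `k` and the greedy chain `(X_i)` with `X_0 = ∅`, for every `i`,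
`f(X*) − f(X_{i+1}) ≤ (1 − 1/k) · (f(X*) − f(X_i))`. -/
theorem greedy_geometric_decay
    {V : Type*} [Fintype V] [DecidableEq V] (f : Finset V → ℝ)
    (hsub : ∀ A B : Finset V, f A + f B ≥ f (A ∪ B) + f (A ∩ B))
    (hmono : ∀ X Y : Finset V, X ⊆ Y → f X ≤ f Y)
    (k : ℕ) (hk : 0 < k)
    (Xstar : Finset V) (hcard : Xstar.card = k)
    (hopt : ∀ Y : Finset V, Y.card ≤ k → f Y ≤ f Xstar)
    (X : ℕ → Finset V) (v : ℕ → V)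
    (hX0 : X 0 = ∅) (i : ℕ)
    (hstep : ∀ j ≤ i, v (j + 1) ∉ X j ∧ X (j + 1) = insert (v (j + 1)) (X j) ∧
      ∀ u : V, u ∉ X j →
        f (insert u (X j)) - f (X j) ≤ f (insert (v (j + 1)) (X j)) - f (X j)) :
    f Xstar - f (X (i + 1)) ≤ (1 - 1 / (k : ℝ)) * (f Xstar - f (X i)) := by
  obtain ⟨hv, hXi1, hmax⟩ := hstep i le_rfl
  set g : ℝ := f (X (i + 1)) - f (X i) with hg
  have hg0 : 0 ≤ g := by
    rw [hg, hXi1]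
    have := hmono (X i) (insert (v (i + 1)) (X i)) (Finset.subset_insert _ _)
    linarith
  -- each marginal gain bounded by g
  have hsum : ∑ e ∈ Xstar \ X i, (f (insert e (X i)) - f (X i)) ≤ (Xstar \ X i).card • g := by
    apply Finset.sum_le_card_nsmul
    intro e he
    have heX : e ∉ X i := (Finset.mem_sdiff.mp he).2
    have := hmax e heX
    rw [hg, hXi1]; linarith
  have hcard' : ((Xstar \ X i).card : ℝ) ≤ (k : ℝ) := by
    have : (Xstar \ X i).card ≤ Xstar.card := Finset.card_le_card (Finset.sdiff_subset)
    exact_mod_cast this.trans_eq hcard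
  have hmb := marginal_sum_bound f hsub hmono (X i) Xstar
  have hXle : f Xstar ≤ f (X i ∪ Xstar) := hmono _ _ Finset.subset_union_right
  have hkey : f Xstar - f (X i) ≤ (k : ℝ) * g := by
    have h1 : ((Xstar \ X i).card : ℝ) * g ≤ (k : ℝ) * g :=
      mul_le_mul_of_nonneg_right hcard' hg0
    have h2 : ((Xstar \ X i).card • g : ℝ) = ((Xstar \ X i).card : ℝ) * g := by
      simp [nsmul_eq_mul]
    linarith
  have hk' : (1 : ℝ) ≤ (k : ℝ) := by exact_mod_cast hk
  have hkpos : (0 : ℝ) < k := by positivity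
  have hdiv : (f Xstar - f (X i)) / k ≤ g := by
    rw [div_le_iff₀ hkpos]; linarith [hkey]
  have : (1 - 1 / (k : ℝ)) * (f Xstar - f (X i))
      = (f Xstar - f (X i)) - (f Xstar - f (X i)) / k := by ring
  rw [this]
  have : f (X (i + 1)) = f (X i) + g := by rw [hg]; ring
  linarith
end

section
/- Let V be a finite set, f : 2^V → ℝ a normalized (f(∅) = 0) monotone non-decreasing submodular set function, k a positive integer, and X* an optimal set of size k maximizing f among sets of size at most k. Let X_k be the set produced after k steps of the greedy algorithm starting from the empty set. Then f(X_k) ≥ (1 − (1 − 1/k)^k) · f(X*) ≥ (1 − 1/e) · f(X*). -/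
/-!
Submodularity bounds the gain `f S - f X` of adding a whole set `S` by the sum of the
single-element gains, each of which is at most the greedy gain. Hence for `#S ≤ k` each greedy
step closes at least a `1/k` fraction of the gap `f S - f X`, so after `k` steps the gap has
shrunk by `(1 - 1/k)^k ≤ 1/e`.
-/

open Finset

section Submodular

variable {V : Type*} [DecidableEq V] {f : Finset V → ℝ}

theorem le_add_sum_insert_sub (hsub : ∀ A B : Finset V, f A + f B ≥ f (A ∪ B) + f (A ∩ B))
    (A S : Finset V) : f (A ∪ S) ≤ f A + ∑ u ∈ S, (f (insert u A) - f A) := by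
  induction S using Finset.induction with
  | empty => simp
  | insert a S ha ih =>
    have hunion : insert a A ∪ (A ∪ S) = A ∪ insert a S := by ext; simp
    have hinter : insert a A ∩ (A ∪ S) = A := by ext; simp; grind
    have := hsub (insert a A) (A ∪ S)
    rw [hunion, hinter] at this
    rw [sum_insert ha]
    linarith

theorem sub_le_card_mul_greedy_gain
    (hsub : ∀ A B : Finset V, f A + f B ≥ f (A ∪ B) + f (A ∩ B))
    (hmono : Monotone f) {S X : Finset V} {w : V}
    (hgreedy : ∀ u ∉ X, f (insert u X) ≤ f (insert w X)) :
    f S - f X ≤ #S * (f (insert w X) - f X) := by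
  have hgain : ∀ u ∈ S, f (insert u X) - f X ≤ f (insert w X) - f X := by
    intro u _
    by_cases hu : u ∈ X
    · rw [insert_eq_of_mem hu, sub_self, sub_nonneg]
      exact hmono (subset_insert w X)
    · linarith [hgreedy u hu]
  calc f S - f X ≤ f (X ∪ S) - f X := by linarith [hmono (subset_union_right : S ⊆ X ∪ S)]
    _ ≤ ∑ u ∈ S, (f (insert u X) - f X) := by linarith [le_add_sum_insert_sub hsub X S]
    _ ≤ ∑ _u ∈ S, (f (insert w X) - f X) := sum_le_sum hgain
    _ = #S * (f (insert w X) - f X) := by rw [sum_const, nsmul_eq_mul]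

theorem greedy_gap_succ_le (hsub : ∀ A B : Finset V, f A + f B ≥ f (A ∪ B) + f (A ∩ B))
    (hmono : Monotone f) {k : ℕ} (hk : 0 < k) {S X : Finset V} (hS : #S ≤ k) {w : V}
    (hgreedy : ∀ u ∉ X, f (insert u X) ≤ f (insert w X)) :
    f S - f (insert w X) ≤ (1 - 1 / k) * (f S - f X) := by
  have hk' : (0 : ℝ) < k := by exact_mod_cast hk
  have hgain : 0 ≤ f (insert w X) - f X := sub_nonneg.2 (hmono (subset_insert w X))
  have hbound : f S - f X ≤ k * (f (insert w X) - f X) :=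
    (sub_le_card_mul_greedy_gain hsub hmono hgreedy).trans
      (mul_le_mul_of_nonneg_right (by exact_mod_cast hS) hgain)
  have : (f S - f X) / k ≤ f (insert w X) - f X := by
    rw [div_le_iff₀ hk']; linarith
  linarith [show (1 - 1 / (k : ℝ)) * (f S - f X) = f S - f X - (f S - f X) / k by ring]

theorem greedy_gap_le (hsub : ∀ A B : Finset V, f A + f B ≥ f (A ∪ B) + f (A ∩ B))
    (hmono : Monotone f) {k : ℕ} (hk : 0 < k) {S : Finset V} (hS : #S ≤ k)
    (X : ℕ → Finset V) (v : ℕ → V)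
    (hstep : ∀ j < k, X (j + 1) = insert (v (j + 1)) (X j) ∧
      ∀ u ∉ X j, f (insert u (X j)) ≤ f (insert (v (j + 1)) (X j))) :
    f S - f (X k) ≤ (1 - 1 / k) ^ k * (f S - f (X 0)) := by
  have hc : (0 : ℝ) ≤ 1 - 1 / k := by
    rw [sub_nonneg, div_le_one (by exact_mod_cast hk)]
    exact_mod_cast hk
  refine le_geom (u := fun j => f S - f (X j)) hc k fun j hj => ?_
  rw [(hstep j hj).1]
  exact greedy_gap_succ_le hsub hmono hk hS (hstep j hj).2

end Submodular

theorem greedy_one_minus_inv_e_general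
    {V : Type*} [DecidableEq V] (f : Finset V → ℝ)
    (hsub : ∀ A B : Finset V, f A + f B ≥ f (A ∪ B) + f (A ∩ B))
    (hmono : ∀ X Y : Finset V, X ⊆ Y → f X ≤ f Y)
    (hnorm : f ∅ = 0)
    (k : ℕ) (hk : 0 < k)
    (Xstar : Finset V) (hcard : Xstar.card = k)
    (X : ℕ → Finset V) (v : ℕ → V)
    (hX0 : X 0 = ∅)
    (hstep : ∀ j < k, v (j + 1) ∉ X j ∧ X (j + 1) = insert (v (j + 1)) (X j) ∧
      ∀ u : V, u ∉ X j → f (insert u (X j)) ≤ f (insert (v (j + 1)) (X j))) :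
    f (X k) ≥ (1 - (1 - 1 / (k : ℝ)) ^ k) * f Xstar ∧
    (1 - (1 - 1 / (k : ℝ)) ^ k) * f Xstar ≥ (1 - 1 / Real.exp 1) * f Xstar := by
  have hmono' : Monotone f := fun _ _ h => hmono _ _ h
  have hopt_nonneg : 0 ≤ f Xstar := hnorm ▸ hmono _ _ (empty_subset _)
  have hgap := greedy_gap_le hsub hmono' hk hcard.le X v fun j hj => (hstep j hj).2
  rw [hX0, hnorm, sub_zero] at hgap
  have hexp : (1 - 1 / (k : ℝ)) ^ k ≤ 1 / Real.exp 1 := by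
    simpa [Real.exp_neg] using
      Real.one_sub_div_pow_le_exp_neg (n := k) (t := 1) (by exact_mod_cast hk)
  constructor
  · linarith [sub_mul 1 ((1 - 1 / (k : ℝ)) ^ k) (f Xstar)]
  · exact mul_le_mul_of_nonneg_right (by linarith) hopt_nonneg

/-- For a normalized monotone non-decreasing submodular `f`, an
optimal set `X*` of size `k` maximizing `f` among sets of size at most `k`, and
`X_k` the set produced after `k` greedy steps from `∅`,
`f(X_k) ≥ (1 − (1 − 1/k)^k) · f(X*) ≥ (1 − 1/e) · f(X*)`. -/
theorem greedy_one_minus_inv_e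
    {V : Type*} [Fintype V] [DecidableEq V] (f : Finset V → ℝ)
    (hsub : ∀ A B : Finset V, f A + f B ≥ f (A ∪ B) + f (A ∩ B))
    (hmono : ∀ X Y : Finset V, X ⊆ Y → f X ≤ f Y)
    (hnorm : f ∅ = 0)
    (k : ℕ) (hk : 0 < k)
    (Xstar : Finset V) (hcard : Xstar.card = k)
    (hopt : ∀ Y : Finset V, Y.card ≤ k → f Y ≤ f Xstar)
    (X : ℕ → Finset V) (v : ℕ → V)
    (hX0 : X 0 = ∅)
    (hstep : ∀ j < k, v (j + 1) ∉ X j ∧ X (j + 1) = insert (v (j + 1)) (X j) ∧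
      ∀ u : V, u ∉ X j → f (insert u (X j)) ≤ f (insert (v (j + 1)) (X j))) :
    f (X k) ≥ (1 - (1 - 1 / (k : ℝ)) ^ k) * f Xstar ∧
    (1 - (1 - 1 / (k : ℝ)) ^ k) * f Xstar ≥ (1 - 1 / Real.exp 1) * f Xstar :=
  greedy_one_minus_inv_e_general f hsub hmono hnorm k hk Xstar hcard X v hX0 hstep
end
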